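/- arXiv:2601.07797 — 3 statements merged into one kernel-verified Lean document; each statement's English description precedes it below -/
import Mathlib

section
/- For positive reals σs², σ1², σ2², define D1* = σs²(σ1²+σ2²)/(σs²+σ1²+σ2²). If 0 < D2 ≤ D1 and D2 ≤ D1·σ2²·(σ1²+σ2²−D1)/(σ1²·D1+σ2²·(σ1²+σ2²)) with D1·σ2²/(σs²+σ2²) ≤ D2, then (1/2)·log(σs²(σ2²·D1+σ1²·D2)/(D1·D2·(σs²+σ1²+σ2²))) ≤ (1/2)·log(σs²·σ1²·σ2²/(D2·(σs²+σ1²+σ2²)·((1−γ)²·D1+γ·σ1²))), where γ = σ2²/(σ1²+σ2²). That is, the separation-based rate is at most the uncoded rate in this regime. -/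
open Real

/-! With `γ = σ₂²/(σ₁²+σ₂²)` the uncoded distortion factor `(1-γ)²D₁ + γσ₁²` equals
`σ₁²(σ₁²D₁ + σ₂²(σ₁²+σ₂²))/(σ₁²+σ₂²)²`. After this simplification the comparison of the two rates
reduces, by an exact polynomial identity, to the upper bound on `D₂` cleared of its denominator. -/

section RateComparison

variable {σ12 σ22 D1 D2 : ℝ}

lemma uncoded_distortion_factor_eq (hσ : σ12 + σ22 ≠ 0) :
    (1 - σ22 / (σ12 + σ22)) ^ 2 * D1 + σ22 / (σ12 + σ22) * σ12
      = σ12 * (σ12 * D1 + σ22 * (σ12 + σ22)) / (σ12 + σ22) ^ 2 := by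
  field_simp
  ring

lemma separation_gap_eq :
    σ22 * D1 * (σ12 + σ22) ^ 2 - (σ22 * D1 + σ12 * D2) * (σ12 * D1 + σ22 * (σ12 + σ22))
      = σ12 * (D1 * σ22 * (σ12 + σ22 - D1) - D2 * (σ12 * D1 + σ22 * (σ12 + σ22))) := by
  ring

lemma separation_factor_le_uncoded_factor (hσ1 : 0 < σ12) (hσ2 : 0 < σ22) (hD1 : 0 < D1)
    (hup : D2 ≤ D1 * σ22 * (σ12 + σ22 - D1) / (σ12 * D1 + σ22 * (σ12 + σ22))) :
    (σ22 * D1 + σ12 * D2) / D1 ≤ σ22 * (σ12 + σ22) ^ 2 / (σ12 * D1 + σ22 * (σ12 + σ22)) := by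
  have hden : 0 < σ12 * D1 + σ22 * (σ12 + σ22) := by positivity
  rw [le_div_iff₀ hden] at hup
  rw [div_le_div_iff₀ hD1 hden]
  nlinarith [separation_gap_eq (σ12 := σ12) (σ22 := σ22) (D1 := D1) (D2 := D2)]

end RateComparison

theorem stmt0_general (σs2 σ12 σ22 D1 D2 : ℝ)
    (hσs : 0 < σs2) (hσ1 : 0 < σ12) (hσ2 : 0 < σ22)
    (hD2pos : 0 < D2) (hD21 : D2 ≤ D1)
    (hup : D2 ≤ D1 * σ22 * (σ12 + σ22 - D1) / (σ12 * D1 + σ22 * (σ12 + σ22))) :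
    (1/2) * logb 2 (σs2 * (σ22 * D1 + σ12 * D2) / (D1 * D2 * (σs2 + σ12 + σ22)))
      ≤ (1/2) * logb 2 (σs2 * σ12 * σ22 /
          (D2 * (σs2 + σ12 + σ22) *
            ((1 - σ22 / (σ12 + σ22))^2 * D1 + (σ22 / (σ12 + σ22)) * σ12))) := by
  have hD1 : 0 < D1 := hD2pos.trans_le hD21
  have hσ : 0 < σ12 + σ22 := by positivity
  have hsep : σs2 * (σ22 * D1 + σ12 * D2) / (D1 * D2 * (σs2 + σ12 + σ22))
      = σs2 / (D2 * (σs2 + σ12 + σ22)) * ((σ22 * D1 + σ12 * D2) / D1) := by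
    field_simp
  have hunc : σs2 * σ12 * σ22 / (D2 * (σs2 + σ12 + σ22) *
        ((1 - σ22 / (σ12 + σ22))^2 * D1 + (σ22 / (σ12 + σ22)) * σ12))
      = σs2 / (D2 * (σs2 + σ12 + σ22)) *
          (σ22 * (σ12 + σ22) ^ 2 / (σ12 * D1 + σ22 * (σ12 + σ22))) := by
    rw [uncoded_distortion_factor_eq hσ.ne']
    field_simp
  rw [hsep, hunc]
  refine mul_le_mul_of_nonneg_left (logb_le_logb_of_le one_lt_two (by positivity) ?_) one_half_pos.le
  exact mul_le_mul_of_nonneg_left (separation_factor_le_uncoded_factor hσ1 hσ2 hD1 hup)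
    (by positivity)

/-- Separation-based rate is at most the uncoded rate in the regime
`D̃₂* ≤ D₂ ≤ D₁σ₂²(σ₁²+σ₂²−D₁)/(σ₁²D₁+σ₂²(σ₁²+σ₂²))`. Logs base 2. -/
theorem stmt0 (σs2 σ12 σ22 D1 D2 : ℝ)
    (hσs : 0 < σs2) (hσ1 : 0 < σ12) (hσ2 : 0 < σ22)
    (hD2pos : 0 < D2) (hD21 : D2 ≤ D1)
    (hlow : D1 * σ22 / (σs2 + σ22) ≤ D2)
    (hup : D2 ≤ D1 * σ22 * (σ12 + σ22 - D1) / (σ12 * D1 + σ22 * (σ12 + σ22))) :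
    (1/2) * logb 2 (σs2 * (σ22 * D1 + σ12 * D2) / (D1 * D2 * (σs2 + σ12 + σ22)))
      ≤ (1/2) * logb 2 (σs2 * σ12 * σ22 /
          (D2 * (σs2 + σ12 + σ22) *
            ((1 - σ22 / (σ12 + σ22))^2 * D1 + (σ22 / (σ12 + σ22)) * σ12))) :=
  stmt0_general σs2 σ12 σ22 D1 D2 hσs hσ1 hσ2 hD2pos hD21 hup
end

section
/- Let σs², σ1², σ2² be positive, P = σs², and 0 < D2 ≤ D1 ≤ σs². If D1·σ2²/(σs²+σ2²) ≤ D2, then α* = (σ2²/σs²)·(D1−D2)/D2 lies in [0,1], R1(α*) = R2(α*), and min over α∈[0,1] of max{R1(α),R2(α)} equals (1/2)·log(σs²(σ2²D1+σ1²D2)/(D1·D2·(σs²+σ1²+σ2²))). -/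
/-!
`R₁` increases and `R₂` decreases in `α`, so `max (R₁ α) (R₂ α)` is minimised on `[0, 1]` where
the two curves cross. Writing `x = α σs²`, the equation `R₁ = R₂` reads
`σ₂² / (x + σ₂²) = D₂ / D₁`, i.e. `x = σ₂² (D₁ - D₂) / D₂`; the lower bound on `D₂` is exactly
`α* ≤ 1`. Substituting `x + σ₂² = σ₂² D₁ / D₂` into either rate gives the claimed value.
-/

open Real Set

theorem isLeast_image_max_of_monotoneOn_of_antitoneOn {α β : Type*} [LinearOrder α]
    [LinearOrder β] {f g : α → β} {s : Set α} {c : α} (hf : MonotoneOn f s)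
    (hg : AntitoneOn g s) (hc : c ∈ s) (hfg : f c = g c) :
    IsLeast ((fun x => max (f x) (g x)) '' s) (f c) := by
  refine ⟨⟨c, hc, by simp [hfg]⟩, ?_⟩
  rintro _ ⟨x, hx, rfl⟩
  rcases le_total c x with hcx | hxc
  · exact (hf hc hx hcx).trans (le_max_left _ _)
  · exact hfg ▸ (hg hx hc hxc).trans (le_max_right _ _)

namespace SeparationScheme

-- The rates `R₁`, `R₂` with the power `P = σs²` substituted.
noncomputable def rate₁ (σs2 σ12 σ22 D1 α : ℝ) : ℝ :=
  (1/2) * logb 2 (σs2 * (α * σs2 + σ12 + σ22) / (D1 * (σs2 + σ12 + σ22)))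

noncomputable def rate₂ (σs2 σ12 σ22 D2 α : ℝ) : ℝ :=
  (1/2) * logb 2 (σs2 * σ22 * (α * σs2 + σ12 + σ22) /
    (D2 * (σs2 + σ12 + σ22) * (α * σs2 + σ22)))

noncomputable def crossing (σs2 σ22 D1 D2 : ℝ) : ℝ := σ22 / σs2 * (D1 - D2) / D2

variable {σs2 σ12 σ22 D1 D2 : ℝ}

theorem rate₁_monotoneOn (hσs : 0 < σs2) (hσ1 : 0 ≤ σ12) (hσ2 : 0 < σ22) (hD1 : 0 < D1) :
    MonotoneOn (rate₁ σs2 σ12 σ22 D1) (Ici 0) := by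
  intro a (ha : 0 ≤ a) b _ hab
  unfold rate₁
  gcongr
  norm_num

theorem rate₂_antitoneOn (hσs : 0 < σs2) (hσ1 : 0 ≤ σ12) (hσ2 : 0 < σ22) (hD2 : 0 < D2) :
    AntitoneOn (rate₂ σs2 σ12 σ22 D2) (Ici 0) := by
  intro a (ha : 0 ≤ a) b (hb : 0 ≤ b) hab
  have key : ∀ α : ℝ, 0 ≤ α → σs2 * σ22 * (α * σs2 + σ12 + σ22) /
      (D2 * (σs2 + σ12 + σ22) * (α * σs2 + σ22)) =
      σs2 * σ22 / (D2 * (σs2 + σ12 + σ22)) * (1 + σ12 / (α * σs2 + σ22)) := by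
    intro α hα
    have : 0 < α * σs2 + σ22 := by positivity
    field_simp
    ring
  unfold rate₂
  rw [key a ha, key b hb]
  gcongr
  norm_num

theorem crossing_mem_Icc (hσs : 0 < σs2) (hσ2 : 0 < σ22) (hD2 : 0 < D2) (hD21 : D2 ≤ D1)
    (hlow : D1 * σ22 / (σs2 + σ22) ≤ D2) :
    crossing σs2 σ22 D1 D2 ∈ Icc 0 1 := by
  unfold crossing
  refine ⟨by have := sub_nonneg.2 hD21; positivity, ?_⟩
  rw [div_le_iff₀ (by positivity)] at hlow
  rw [div_le_one hD2, div_mul_eq_mul_div, div_le_iff₀ hσs]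
  linarith

theorem crossing_mul (hσs : σs2 ≠ 0) (hD2 : D2 ≠ 0) :
    crossing σs2 σ22 D1 D2 * σs2 = σ22 * (D1 - D2) / D2 := by
  unfold crossing
  field_simp

theorem rate₁_crossing (hσs : σs2 ≠ 0) (hD2 : D2 ≠ 0) :
    rate₁ σs2 σ12 σ22 D1 (crossing σs2 σ22 D1 D2) =
      (1/2) * logb 2 (σs2 * (σ22 * D1 + σ12 * D2) / (D1 * D2 * (σs2 + σ12 + σ22))) := by
  unfold rate₁
  rw [crossing_mul hσs hD2]
  congr 2
  field_simp
  ring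

theorem rate₂_crossing (hσs : σs2 ≠ 0) (hσ2 : σ22 ≠ 0) (hD2 : D2 ≠ 0) :
    rate₂ σs2 σ12 σ22 D2 (crossing σs2 σ22 D1 D2) =
      (1/2) * logb 2 (σs2 * (σ22 * D1 + σ12 * D2) / (D1 * D2 * (σs2 + σ12 + σ22))) := by
  unfold rate₂
  rw [crossing_mul hσs hD2]
  congr 2
  field_simp
  ring

end SeparationScheme

open SeparationScheme

theorem stmt2_general (σs2 σ12 σ22 P D1 D2 : ℝ) (hP : P = σs2)
    (hσs : 0 < σs2) (hσ1 : 0 < σ12) (hσ2 : 0 < σ22)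
    (hD2pos : 0 < D2) (hD21 : D2 ≤ D1)
    (hlow : D1 * σ22 / (σs2 + σ22) ≤ D2)
    (R1 R2 : ℝ → ℝ)
    (hR1 : R1 = fun α : ℝ =>
      (1/2) * logb 2 (σs2 * (α * P + σ12 + σ22) / (D1 * (P + σ12 + σ22))))
    (hR2 : R2 = fun α : ℝ =>
      (1/2) * logb 2 (σs2 * σ22 * (α * P + σ12 + σ22) / (D2 * (P + σ12 + σ22) * (α * P + σ22))))
    (αstar : ℝ) (hα : αstar = (σ22 / σs2) * (D1 - D2) / D2) :
    αstar ∈ Set.Icc (0:ℝ) 1 ∧ R1 αstar = R2 αstar ∧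
    IsLeast ((fun α => max (R1 α) (R2 α)) '' Set.Icc (0:ℝ) 1)
      ((1/2) * logb 2 (σs2 * (σ22 * D1 + σ12 * D2) / (D1 * D2 * (σs2 + σ12 + σ22)))) := by
  subst P
  obtain rfl : R1 = rate₁ σs2 σ12 σ22 D1 := hR1
  obtain rfl : R2 = rate₂ σs2 σ12 σ22 D2 := hR2
  obtain rfl : αstar = crossing σs2 σ22 D1 D2 := hα
  have hD1 : 0 < D1 := hD2pos.trans_le hD21
  have hmem := crossing_mem_Icc hσs hσ2 hD2pos hD21 hlow
  have h₁ := rate₁_crossing (σ12 := σ12) (σ22 := σ22) (D1 := D1) hσs.ne' hD2pos.ne'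
  have h₂ := rate₂_crossing (σ12 := σ12) (D1 := D1) hσs.ne' hσ2.ne' hD2pos.ne'
  have hcross : rate₁ σs2 σ12 σ22 D1 (crossing σs2 σ22 D1 D2) =
      rate₂ σs2 σ12 σ22 D2 (crossing σs2 σ22 D1 D2) := h₁.trans h₂.symm
  refine ⟨hmem, hcross, h₁ ▸ isLeast_image_max_of_monotoneOn_of_antitoneOn ?_ ?_ hmem hcross⟩
  · exact (rate₁_monotoneOn hσs hσ1.le hσ2 hD1).mono Icc_subset_Ici_self
  · exact (rate₂_antitoneOn hσs hσ1.le hσ2 hD2pos).mono Icc_subset_Ici_self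

/-- When `D1·σ2²/(σs²+σ2²) ≤ D2`, the crossing point `α* = (σ2²/σs²)(D1−D2)/D2` lies in
`[0,1]`, `R1(α*) = R2(α*)`, and the min over `[0,1]` of `max{R1,R2}` equals
`(1/2)log₂(σs²(σ2²D1+σ1²D2)/(D1D2(σs²+σ1²+σ2²)))`. Here `P = σs²`. -/
theorem stmt2 (σs2 σ12 σ22 P D1 D2 : ℝ) (hP : P = σs2)
    (hσs : 0 < σs2) (hσ1 : 0 < σ12) (hσ2 : 0 < σ22)
    (hD2pos : 0 < D2) (hD21 : D2 ≤ D1) (hD1s : D1 ≤ σs2)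
    (hlow : D1 * σ22 / (σs2 + σ22) ≤ D2)
    (R1 R2 : ℝ → ℝ)
    (hR1 : R1 = fun α : ℝ =>
      (1/2) * logb 2 (σs2 * (α * P + σ12 + σ22) / (D1 * (P + σ12 + σ22))))
    (hR2 : R2 = fun α : ℝ =>
      (1/2) * logb 2 (σs2 * σ22 * (α * P + σ12 + σ22) / (D2 * (P + σ12 + σ22) * (α * P + σ22))))
    (αstar : ℝ) (hα : αstar = (σ22 / σs2) * (D1 - D2) / D2) :
    αstar ∈ Set.Icc (0:ℝ) 1 ∧ R1 αstar = R2 αstar ∧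
    IsLeast ((fun α => max (R1 α) (R2 α)) '' Set.Icc (0:ℝ) 1)
      ((1/2) * logb 2 (σs2 * (σ22 * D1 + σ12 * D2) / (D1 * D2 * (σs2 + σ12 + σ22)))) :=
  stmt2_general σs2 σ12 σ22 P D1 D2 hP hσs hσ1 hσ2 hD2pos hD21 hlow R1 R2 hR1 hR2 αstar hα
end

section
/- Let (S_i, T_i), i = 1..n be i.i.d. pairs of finite random variables and Y be any random variable such that S^{i−1} − (T^{i−1}, Y) − T_i is a Markov chain for each i. Then I(T^n; Y) = Σ_{i=1}^n I(T_i; (Y, T^{i−1}, S^{i−1})). -/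
open Finset

/-- Shannon entropy (natural log) of a finitely supported probability mass function. -/
noncomputable def ent {A : Type*} [Fintype A] (q : A → ℝ) : ℝ :=
  ∑ a, Real.negMulLog (q a)

/-- Pushforward of a pmf `p` on a finite sample space `Ω` along a map `f`. -/
noncomputable def push {Ω A : Type*} [Fintype Ω] [DecidableEq A]
    (p : Ω → ℝ) (f : Ω → A) : A → ℝ :=
  fun a => ∑ ω, if f ω = a then p ω else 0

/-- Mutual information `I(f;g)` of two finite random variables defined on `(Ω, p)`. -/
noncomputable def mi {Ω A B : Type*} [Fintype Ω] [Fintype A] [Fintype B]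
    [DecidableEq A] [DecidableEq B] (p : Ω → ℝ) (f : Ω → A) (g : Ω → B) : ℝ :=
  ent (push p f) + ent (push p g) - ent (push p (fun ω => (f ω, g ω)))

/-- Conditional mutual information `I(f;g|h)` of finite random variables on `(Ω, p)`. -/
noncomputable def cmi {Ω A B C : Type*} [Fintype Ω] [Fintype A] [Fintype B] [Fintype C]
    [DecidableEq A] [DecidableEq B] [DecidableEq C]
    (p : Ω → ℝ) (f : Ω → A) (g : Ω → B) (h : Ω → C) : ℝ :=
  ent (push p (fun ω => (f ω, h ω))) + ent (push p (fun ω => (g ω, h ω)))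
    - ent (push p (fun ω => (f ω, g ω, h ω))) - ent (push p h)

/-- Prefix `(f_1,…,f_{i−1})` of a sequence of random variables, as an `Option`-valued tuple. -/
def past {Ω A : Type*} {n : ℕ} (f : Fin n → Ω → A) (i : Fin n) (ω : Ω) : Fin n → Option A :=
  fun j => if (j : ℕ) < (i : ℕ) then some (f j ω) else none

set_option linter.unusedSectionVars false

section helpers
variable {Ω A B C : Type*} [Fintype Ω] [Fintype A] [Fintype B] [Fintype C]
  [DecidableEq A] [DecidableEq B] [DecidableEq C]

lemma push_comp (p : Ω → ℝ) (f : Ω → A) (g : A → B) :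
    push p (fun ω => g (f ω)) = push (push p f) g := by
  funext b
  simp only [push]
  have h1 : ∀ a : A, (if g a = b then ∑ ω : Ω, if f ω = a then p ω else 0 else 0)
      = ∑ ω : Ω, if f ω = a ∧ g a = b then p ω else 0 := by
    intro a; split_ifs with h <;> simp [h]
  simp only [h1]
  rw [Finset.sum_comm]
  refine Finset.sum_congr rfl fun ω _ => ?_
  simp only [ite_and]
  rw [Finset.sum_ite_eq]
  simp

lemma push_sum (p : Ω → ℝ) (f : Ω → A) : ∑ a, push p f a = ∑ ω, p ω := by
  simp only [push]
  rw [Finset.sum_comm]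
  refine Finset.sum_congr rfl fun ω _ => ?_
  simp

lemma push_nonneg (p : Ω → ℝ) (hp0 : ∀ ω, 0 ≤ p ω) (f : Ω → A) (a : A) :
    0 ≤ push p f a := by
  refine Finset.sum_nonneg fun ω _ => ?_
  split
  · exact hp0 ω
  · exact le_refl 0

lemma ent_push_congr (p : Ω → ℝ) (f : Ω → A) (g : Ω → B) (e : A → B)
    (hcomp : ∀ ω, e (f ω) = g ω)
    (he : ∀ ω ω', g ω = g ω' → f ω = f ω') :
    ent (push p g) = ent (push p f) := by
  have hzg : ∀ b ∈ univ \ Finset.image g univ, Real.negMulLog (push p g b) = 0 := by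
    intro b hb
    simp only [Finset.mem_sdiff, Finset.mem_image] at hb
    have : push p g b = 0 := by
      refine Finset.sum_eq_zero fun ω _ => ?_
      rw [if_neg]
      exact fun h => hb.2 ⟨ω, mem_univ ω, h⟩
    rw [this, Real.negMulLog_zero]
  have hzf : ∀ a ∈ univ \ Finset.image f univ, Real.negMulLog (push p f a) = 0 := by
    intro a ha
    simp only [Finset.mem_sdiff, Finset.mem_image] at ha
    have : push p f a = 0 := by
      refine Finset.sum_eq_zero fun ω _ => ?_
      rw [if_neg]
      exact fun h => ha.2 ⟨ω, mem_univ ω, h⟩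
    rw [this, Real.negMulLog_zero]
  have himg : Finset.image g univ = Finset.image e (Finset.image f univ) := by
    rw [Finset.image_image]
    exact Finset.image_congr fun ω _ => (hcomp ω).symm
  unfold ent
  rw [← Finset.sum_subset (Finset.subset_univ (Finset.image g univ))
      (fun b _ hb => hzg b (Finset.mem_sdiff.2 ⟨mem_univ b, hb⟩)),
    ← Finset.sum_subset (Finset.subset_univ (Finset.image f univ))
      (fun a _ ha => hzf a (Finset.mem_sdiff.2 ⟨mem_univ a, ha⟩)),
    himg, Finset.sum_image ?inj]
  case inj =>
    intro a ha a' ha' hee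
    obtain ⟨ω, -, rfl⟩ := Finset.mem_image.1 ha
    obtain ⟨ω', -, rfl⟩ := Finset.mem_image.1 ha'
    rw [hcomp, hcomp] at hee
    exact he ω ω' hee
  refine Finset.sum_congr rfl fun a ha => ?_
  obtain ⟨ω₀, -, rfl⟩ := Finset.mem_image.1 ha
  congr 1
  refine Finset.sum_congr rfl fun ω _ => ?_
  congr 1
  rw [hcomp ω₀]
  exact propext ⟨he ω ω₀, fun h => by rw [← hcomp ω, ← hcomp ω₀, h]⟩

end helpers

section helpers2
variable {Ω A B C D : Type*} [Fintype Ω] [Fintype A] [Fintype B] [Fintype C] [Fintype D]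
  [DecidableEq A] [DecidableEq B] [DecidableEq C] [DecidableEq D]

lemma ent_push_const (p : Ω → ℝ) (hp1 : ∑ ω, p ω = 1) (c : A) :
    ent (push p (fun _ => c)) = 0 := by
  unfold ent push
  rw [Finset.sum_eq_single c]
  · simp [hp1]
  · intro a _ ha
    rw [Finset.sum_eq_zero, Real.negMulLog_zero]
    intro ω _
    rw [if_neg (fun h => ha h.symm)]
  · simp

lemma ent_prodfn (q1 : A → ℝ) (q2 : B → ℝ) (h1 : ∑ a, q1 a = 1) (h2 : ∑ b, q2 b = 1) :
    ent (fun x : A × B => q1 x.1 * q2 x.2) = ent q1 + ent q2 := by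
  unfold ent
  rw [Fintype.sum_prod_type]
  have key : ∀ a, ∑ b, Real.negMulLog (q1 a * q2 b)
      = Real.negMulLog (q1 a) + q1 a * ∑ b, Real.negMulLog (q2 b) := by
    intro a
    simp only [Real.negMulLog_mul]
    rw [Finset.sum_add_distrib, ← Finset.sum_mul, ← Finset.mul_sum, h2, one_mul]
  simp only [key]
  rw [Finset.sum_add_distrib, ← Finset.sum_mul, h1, one_mul]

lemma cmi_eq (p : Ω → ℝ) (f : Ω → A) (g : Ω → B) (h : Ω → C) :
    mi p f (fun ω => (g ω, h ω)) = mi p f h + cmi p f g h := by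
  simp only [mi, cmi]
  ring

lemma mi_congr_right (p : Ω → ℝ) (f : Ω → A) (g : Ω → B) (g' : Ω → C) (e : B → C)
    (hcomp : ∀ ω, e (g ω) = g' ω) (he : ∀ ω ω', g' ω = g' ω' → g ω = g ω') :
    mi p f g' = mi p f g := by
  unfold mi
  rw [ent_push_congr p g g' e hcomp he,
    ent_push_congr p (fun ω => (f ω, g ω)) (fun ω => (f ω, g' ω)) (Prod.map id e)
      (fun ω => by simp [hcomp ω])
      (fun ω ω' hh => by
        simp only [Prod.mk.injEq] at hh ⊢
        exact ⟨hh.1, he ω ω' hh.2⟩)]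

lemma cmi_symm (p : Ω → ℝ) (f : Ω → A) (g : Ω → B) (h : Ω → C) :
    cmi p f g h = cmi p g f h := by
  unfold cmi
  rw [ent_push_congr p (fun ω => (g ω, f ω, h ω)) (fun ω => (f ω, g ω, h ω))
      (fun x => (x.2.1, x.1, x.2.2)) (fun ω => rfl)
      (fun ω ω' hh => by
        simp only [Prod.mk.injEq] at hh ⊢
        exact ⟨hh.2.1, hh.1, hh.2.2⟩)]
  ring

lemma mi_eq_zero_of_indep (p : Ω → ℝ) (hp1 : ∑ ω, p ω = 1) (f : Ω → A) (g : Ω → B)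
    (hfact : push p (fun ω => (f ω, g ω)) = fun x => push p f x.1 * push p g x.2) :
    mi p f g = 0 := by
  unfold mi
  rw [hfact, ent_prodfn _ _ (by rw [push_sum, hp1]) (by rw [push_sum, hp1])]
  ring

end helpers2

section product
variable {A B C : Type*} [Fintype A] [Fintype B] [Fintype C]
  [DecidableEq A] [DecidableEq B] [DecidableEq C]

lemma prod_split {n : ℕ} (i : Fin n) (h : Fin n → ℝ) :
    ∏ j, h j = h i * ∏ j : {j : Fin n // j ≠ i}, h j := by
  rw [Fintype.prod_eq_mul_prod_compl i h]
  congr 1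
  exact Eq.symm (Finset.prod_subtype ({i}ᶜ : Finset (Fin n)) (p := fun j => j ≠ i)
    (fun x => by simp) h) |>.symm

lemma ite_and_mul_ite {P Q : Prop} [Decidable P] [Decidable Q] (u v : ℝ) :
    (if P ∧ Q then u * v else 0) = (if P then u else 0) * (if Q then v else 0) := by
  by_cases hP : P <;> by_cases hQ : Q <;> simp [hP, hQ]

set_option maxHeartbeats 1000000 in
lemma push_product_indep {n : ℕ} (μ : (Fin n → A) → ℝ) (q : A → ℝ)
    (hμ : ∀ x, μ x = ∏ j, q (x j)) (hq1 : ∑ a, q a = 1)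
    (i : Fin n) (f0 : A → B) (G : (Fin n → A) → C)
    (hG : ∀ x x' : Fin n → A, (∀ j, j ≠ i → x j = x' j) → G x = G x') :
    push μ (fun x => (f0 (x i), G x)) = fun bc =>
      push μ (fun x => f0 (x i)) bc.1 * push μ G bc.2 := by
  have hA : Nonempty A := by
    by_contra hA
    rw [not_nonempty_iff] at hA
    rw [Finset.univ_eq_empty, Finset.sum_empty] at hq1
    exact zero_ne_one hq1
  obtain ⟨a₀⟩ := hA
  set E := Equiv.funSplitAt i A with hE
  have hEi : ∀ (a : A) (y : {j : Fin n // j ≠ i} → A), (E.symm (a, y)) i = a := by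
    intro a y; rw [hE, Equiv.funSplitAt_symm_apply, dif_pos rfl]
  have hEj : ∀ (a : A) (y : {j : Fin n // j ≠ i} → A) (j : Fin n) (hj : j ≠ i),
      (E.symm (a, y)) j = y ⟨j, hj⟩ := by
    intro a y j hj; rw [hE, Equiv.funSplitAt_symm_apply, dif_neg hj]
  have hG' : ∀ (a : A) (y : {j : Fin n // j ≠ i} → A),
      G (E.symm (a, y)) = G (E.symm (a₀, y)) := by
    intro a y
    exact hG _ _ (fun j hj => by rw [hEj a y j hj, hEj a₀ y j hj])
  have hprod : ∀ (a : A) (y : {j : Fin n // j ≠ i} → A),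
      μ (E.symm (a, y)) = q a * ∏ j' : {j : Fin n // j ≠ i}, q (y j') := by
    intro a y
    rw [hμ, prod_split i]
    congr 1
    · rw [hEi]
    · exact Finset.prod_congr rfl fun j' _ => by rw [hEj a y j'.1 j'.2]
  have hsum1 : ∑ y : {j : Fin n // j ≠ i} → A, ∏ j' : {j : Fin n // j ≠ i}, q (y j') = 1 := by
    rw [← Fintype.prod_sum (fun (_ : {j : Fin n // j ≠ i}) (a : A) => q a)]
    simp [hq1]
  funext bc
  obtain ⟨b, c⟩ := bc
  have hpush1 : push μ (fun x => (f0 (x i), G x)) (b, c) = ∑ a, ∑ y : {j : Fin n // j ≠ i} → A,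
      if (f0 ((E.symm (a, y)) i), G (E.symm (a, y))) = (b, c) then
        q a * ∏ j' : {j : Fin n // j ≠ i}, q (y j') else 0 := by
    have h0 := Equiv.sum_comp E.symm
      (fun x => if (f0 (x i), G x) = (b, c) then μ x else 0)
    rw [show push μ (fun x => (f0 (x i), G x)) (b, c)
        = ∑ x, if (f0 (x i), G x) = (b, c) then μ x else 0 from rfl, ← h0,
      Fintype.sum_prod_type]
    exact Finset.sum_congr rfl fun a _ => Finset.sum_congr rfl fun y _ => by
      rw [hprod a y]
  have hpush2 : push μ (fun x => f0 (x i)) b = ∑ a, ∑ y : {j : Fin n // j ≠ i} → A,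
      if f0 ((E.symm (a, y)) i) = b then
        q a * ∏ j' : {j : Fin n // j ≠ i}, q (y j') else 0 := by
    have h0 := Equiv.sum_comp E.symm (fun x => if f0 (x i) = b then μ x else 0)
    rw [show push μ (fun x => f0 (x i)) b
        = ∑ x, if f0 (x i) = b then μ x else 0 from rfl, ← h0,
      Fintype.sum_prod_type]
    exact Finset.sum_congr rfl fun a _ => Finset.sum_congr rfl fun y _ => by
      rw [hprod a y]
  have hpush3 : push μ G c = ∑ a, ∑ y : {j : Fin n // j ≠ i} → A,
      if G (E.symm (a, y)) = c then
        q a * ∏ j' : {j : Fin n // j ≠ i}, q (y j') else 0 := by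
    have h0 := Equiv.sum_comp E.symm (fun x => if G x = c then μ x else 0)
    rw [show push μ G c = ∑ x, if G x = c then μ x else 0 from rfl, ← h0,
      Fintype.sum_prod_type]
    exact Finset.sum_congr rfl fun a _ => Finset.sum_congr rfl fun y _ => by
      rw [hprod a y]
  rw [hpush1, hpush2, hpush3]
  have e2 : (∑ a, ∑ y : {j : Fin n // j ≠ i} → A,
      if f0 ((E.symm (a, y)) i) = b then
        q a * ∏ j' : {j : Fin n // j ≠ i}, q (y j') else 0)
      = ∑ a, (if f0 a = b then q a else 0) := by
    refine Finset.sum_congr rfl fun a _ => ?_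
    have h1 : ∀ y : {j : Fin n // j ≠ i} → A,
        (if f0 ((E.symm (a, y)) i) = b then
          q a * ∏ j' : {j : Fin n // j ≠ i}, q (y j') else 0)
        = (if f0 a = b then q a else 0) * ∏ j' : {j : Fin n // j ≠ i}, q (y j') := by
      intro y
      rw [hEi]
      split_ifs <;> simp
    simp only [h1]
    rw [← Finset.mul_sum, hsum1, mul_one]
  have e3 : (∑ a, ∑ y : {j : Fin n // j ≠ i} → A,
      if G (E.symm (a, y)) = c then
        q a * ∏ j' : {j : Fin n // j ≠ i}, q (y j') else 0)
      = ∑ y : {j : Fin n // j ≠ i} → A,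
        (if G (E.symm (a₀, y)) = c then ∏ j' : {j : Fin n // j ≠ i}, q (y j') else 0) := by
    have h1 : ∀ (a : A) (y : {j : Fin n // j ≠ i} → A),
        (if G (E.symm (a, y)) = c then
          q a * ∏ j' : {j : Fin n // j ≠ i}, q (y j') else 0)
        = q a * (if G (E.symm (a₀, y)) = c then
            ∏ j' : {j : Fin n // j ≠ i}, q (y j') else 0) := by
      intro a y
      rw [hG']
      split_ifs <;> simp
    simp only [h1, ← Finset.mul_sum]
    rw [← Finset.sum_mul, hq1, one_mul]
  rw [e2, e3, Finset.sum_mul_sum]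
  refine Finset.sum_congr rfl fun a _ => Finset.sum_congr rfl fun y _ => ?_
  have : (f0 ((E.symm (a, y)) i), G (E.symm (a, y))) = (f0 a, G (E.symm (a₀, y))) := by
    rw [hEi, hG']
  rw [this]
  simp only [Prod.mk.injEq]
  exact ite_and_mul_ite _ _

end product

def pfx {Ω 𝒯 : Type*} {n : ℕ} (T : Fin n → Ω → 𝒯) (k : ℕ) (ω : Ω) : Fin n → Option 𝒯 :=
  fun j => if (j : ℕ) < k then some (T j ω) else none

section pfxlem
variable {Ω 𝒯 𝒴 : Type*} [Fintype Ω] [Fintype 𝒯] [Fintype 𝒴] [DecidableEq 𝒯] [DecidableEq 𝒴]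
  {n : ℕ}

lemma pfx_comp (T : Fin n → Ω → 𝒯) (i : Fin n) (ω : Ω) :
    (fun j : Fin n => if (j:ℕ) = (i:ℕ) then some (T i ω) else pfx T (i:ℕ) ω j)
      = pfx T ((i:ℕ)+1) ω := by
  funext j
  unfold pfx
  by_cases hji : (j:ℕ) = (i:ℕ)
  · have hj : j = i := Fin.ext hji
    subst hj
    simp
  · rw [if_neg hji]
    by_cases hlt : (j:ℕ) < (i:ℕ)
    · rw [if_pos hlt, if_pos (by omega)]
    · rw [if_neg hlt, if_neg (by omega)]

lemma pfx_inv (T : Fin n → Ω → 𝒯) (i : Fin n) (ω ω' : Ω)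
    (h : pfx T ((i:ℕ)+1) ω = pfx T ((i:ℕ)+1) ω') :
    T i ω = T i ω' ∧ pfx T (i:ℕ) ω = pfx T (i:ℕ) ω' := by
  have hj : ∀ j : Fin n, (j:ℕ) < (i:ℕ)+1 → T j ω = T j ω' := by
    intro j hjlt
    have h2 := congrFun h j
    unfold pfx at h2
    rw [if_pos hjlt, if_pos hjlt] at h2
    exact Option.some.inj h2
  refine ⟨hj i (by omega), funext fun j => ?_⟩
  unfold pfx
  by_cases hlt : (j:ℕ) < (i:ℕ)
  · rw [if_pos hlt, if_pos hlt, hj j (by omega)]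
  · rw [if_neg hlt, if_neg hlt]

lemma ent_pair_pfx (p : Ω → ℝ) (T : Fin n → Ω → 𝒯) (i : Fin n) :
    ent (push p (fun ω => (T i ω, pfx T (i:ℕ) ω))) = ent (push p (pfx T ((i:ℕ)+1))) :=
  Eq.symm <| ent_push_congr p (fun ω => (T i ω, pfx T (i:ℕ) ω)) (pfx T ((i:ℕ)+1))
    (fun tv => fun j => if (j:ℕ) = (i:ℕ) then some tv.1 else tv.2 j)
    (fun ω => pfx_comp T i ω)
    (fun ω ω' h => by
      obtain ⟨h1, h2⟩ := pfx_inv T i ω ω' h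
      show (T i ω, pfx T (i:ℕ) ω) = (T i ω', pfx T (i:ℕ) ω')
      rw [h1, h2])

lemma ent_triple_pfx (p : Ω → ℝ) (T : Fin n → Ω → 𝒯) (Y : Ω → 𝒴) (i : Fin n) :
    ent (push p (fun ω => (T i ω, Y ω, pfx T (i:ℕ) ω)))
      = ent (push p (fun ω => (Y ω, pfx T ((i:ℕ)+1) ω))) :=
  Eq.symm <| (ent_push_congr p (fun ω => (T i ω, Y ω, pfx T (i:ℕ) ω))
    (fun ω => (Y ω, pfx T ((i:ℕ)+1) ω))
    (fun tyv => (tyv.2.1, fun j => if (j:ℕ) = (i:ℕ) then some tyv.1 else tyv.2.2 j))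
    (fun ω => by
      show (Y ω, _) = (Y ω, pfx T ((i:ℕ)+1) ω)
      rw [pfx_comp T i ω])
    (fun ω ω' h => by
      simp only [Prod.mk.injEq] at h ⊢
      obtain ⟨h1, h2⟩ := pfx_inv T i ω ω' h.2
      exact ⟨h1, h.1, h2⟩))

lemma ent_pfx_zero (p : Ω → ℝ) (hp1 : ∑ ω, p ω = 1) (T : Fin n → Ω → 𝒯) :
    ent (push p (pfx T 0)) = 0 := by
  have h0 : pfx T 0 = fun _ => fun _ => (none : Option 𝒯) := by
    funext ω j; simp [pfx]
  rw [h0]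
  exact ent_push_const p hp1 _

lemma ent_pfx_zero_pair (p : Ω → ℝ) (T : Fin n → Ω → 𝒯) (Y : Ω → 𝒴) :
    ent (push p (fun ω => (Y ω, pfx T 0 ω))) = ent (push p Y) :=
  ent_push_congr p Y (fun ω => (Y ω, pfx T 0 ω))
    (fun y => (y, fun _ => none))
    (fun ω => by
      have hz : pfx T 0 ω = fun _ => none := by funext j; simp [pfx]
      show ((Y ω, fun _ => none) : 𝒴 × (Fin n → Option 𝒯)) = (Y ω, pfx T 0 ω)
      rw [hz])
    (fun ω ω' h => congrArg Prod.fst h)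

lemma ent_pfx_full (p : Ω → ℝ) (T : Fin n → Ω → 𝒯) :
    ent (push p (pfx T n)) = ent (push p (fun ω => fun j => T j ω)) :=
  ent_push_congr p (fun ω => fun j => T j ω) (pfx T n)
    (fun v => fun j => some (v j))
    (fun ω => by funext j; simp [pfx, j.isLt])
    (fun ω ω' h => by
      funext j
      have h2 := congrFun h j
      simp [pfx, j.isLt] at h2
      exact h2)

lemma ent_pfx_full_pair (p : Ω → ℝ) (T : Fin n → Ω → 𝒯) (Y : Ω → 𝒴) :
    ent (push p (fun ω => (Y ω, pfx T n ω)))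
      = ent (push p (fun ω => (Y ω, fun j => T j ω))) :=
  ent_push_congr p (fun ω => (Y ω, fun j => T j ω)) (fun ω => (Y ω, pfx T n ω))
    (Prod.map id (fun v => fun j => some (v j)))
    (fun ω => by
      show (Y ω, _) = (Y ω, pfx T n ω)
      congr 1
      funext j; simp [pfx, j.isLt])
    (fun ω ω' h => by
      simp only [Prod.mk.injEq] at h ⊢
      refine ⟨h.1, funext fun j => ?_⟩
      have h2 := congrFun h.2 j
      simp [pfx, j.isLt] at h2
      exact h2)

lemma ent_swap (p : Ω → ℝ) {A B : Type*} [Fintype A] [Fintype B] [DecidableEq A]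
    [DecidableEq B] (f : Ω → A) (g : Ω → B) :
    ent (push p (fun ω => (g ω, f ω))) = ent (push p (fun ω => (f ω, g ω))) :=
  ent_push_congr p (fun ω => (f ω, g ω)) (fun ω => (g ω, f ω)) Prod.swap
    (fun ω => rfl)
    (fun ω ω' h => by
      simp only [Prod.mk.injEq] at h ⊢
      exact ⟨h.2, h.1⟩)

end pfxlem

set_option maxHeartbeats 1000000 in
/-- Single-letterization identity: if `(S_i,T_i)` are i.i.d. and
`S^{i−1} − (T^{i−1}, Y) − T_i` is a Markov chain for each `i`, then
`I(T^n; Y) = Σ_i I(T_i; (Y, T^{i−1}, S^{i−1}))`. -/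
theorem stmt10 {Ω 𝒮 𝒯 𝒴 : Type*} [Fintype Ω] [Fintype 𝒮] [Fintype 𝒯] [Fintype 𝒴]
    [DecidableEq 𝒮] [DecidableEq 𝒯] [DecidableEq 𝒴] {n : ℕ}
    (p : Ω → ℝ) (hp0 : ∀ ω, 0 ≤ p ω) (hp1 : ∑ ω, p ω = 1)
    (S : Fin n → Ω → 𝒮) (T : Fin n → Ω → 𝒯) (Y : Ω → 𝒴)
    (hiid : ∃ q : 𝒮 × 𝒯 → ℝ,
      push p (fun ω => fun i => (S i ω, T i ω)) = fun x => ∏ i, q (x i))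
    (hMarkov : ∀ i : Fin n,
      cmi p (past S i) (T i) (fun ω => (past T i ω, Y ω)) = 0) :
    mi p (fun ω => fun i => T i ω) Y
      = ∑ i : Fin n, mi p (T i) (fun ω => (Y ω, past T i ω, past S i ω)) := by
  classical
  obtain ⟨q, hq⟩ := hiid
  have hμ : ∀ x, push p (fun ω => fun i => (S i ω, T i ω)) x = ∏ j, |q (x j)| := by
    intro x
    have h1 : push p (fun ω => fun i => (S i ω, T i ω)) x = ∏ j, q (x j) := congrFun hq x
    have h2 : 0 ≤ push p (fun ω => fun i => (S i ω, T i ω)) x :=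
      push_nonneg p hp0 _ x
    rw [← Finset.abs_prod, ← h1, abs_of_nonneg h2]
  have hq'1 : ∀ _i : Fin n, ∑ a : 𝒮 × 𝒯, |q a| = 1 := by
    intro i
    have hc : (∑ a : 𝒮 × 𝒯, |q a|) ^ n = 1 := by
      rw [Fintype.sum_pow]
      rw [Finset.sum_congr rfl fun x _ => (hμ x).symm, push_sum, hp1]
    have hnn : 0 ≤ ∑ a : 𝒮 × 𝒯, |q a| := Finset.sum_nonneg fun a _ => abs_nonneg _
    have hn0 : n ≠ 0 := i.pos.ne'
    by_contra hne
    rcases lt_or_gt_of_ne hne with hlt | hgt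
    · exact absurd hc (ne_of_lt (pow_lt_one₀ hnn hlt hn0))
    · exact absurd hc (ne_of_gt (one_lt_pow₀ hgt hn0))
  -- independence of T i from its past
  have hindep : ∀ i : Fin n, mi p (T i) (past T i) = 0 := by
    intro i
    have hfact := push_product_indep (push p (fun ω => fun i => (S i ω, T i ω)))
      (fun a => |q a|) hμ (hq'1 i) i (fun a => a.2)
      (fun x => (fun j : Fin n => if (j:ℕ) < (i:ℕ) then some (x j).2 else none))
      (fun x x' hxx => by
        funext j
        show (if (j:ℕ) < (i:ℕ) then some (x j).2 else none)
            = (if (j:ℕ) < (i:ℕ) then some (x' j).2 else none)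
        by_cases hlt : (j:ℕ) < (i:ℕ)
        · rw [if_pos hlt, if_pos hlt, hxx j (fun hji => by omega)]
        · rw [if_neg hlt, if_neg hlt])
    apply mi_eq_zero_of_indep p hp1
    have c1 : push p (fun ω => (T i ω, past T i ω))
        = push (push p (fun ω => fun i => (S i ω, T i ω)))
          (fun x => ((x i).2, fun j : Fin n => if (j:ℕ) < (i:ℕ) then some (x j).2 else none)) :=
      push_comp p (fun ω => fun i => (S i ω, T i ω))
        (fun x => ((x i).2, fun j : Fin n => if (j:ℕ) < (i:ℕ) then some (x j).2 else none))
    have c2 : push p (T i)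
        = push (push p (fun ω => fun i => (S i ω, T i ω))) (fun x => (x i).2) :=
      push_comp p (fun ω => fun i => (S i ω, T i ω)) (fun x => (x i).2)
    have c3 : push p (past T i)
        = push (push p (fun ω => fun i => (S i ω, T i ω)))
          (fun x => fun j : Fin n => if (j:ℕ) < (i:ℕ) then some (x j).2 else none) :=
      push_comp p (fun ω => fun i => (S i ω, T i ω))
        (fun x => fun j : Fin n => if (j:ℕ) < (i:ℕ) then some (x j).2 else none)
    rw [c1, c2, c3, hfact]
  -- Step A
  have stepA : ∀ i : Fin n, mi p (T i) (fun ω => (Y ω, past T i ω, past S i ω))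
      = cmi p (T i) Y (past T i) := by
    intro i
    have r1 : mi p (T i) (fun ω => (Y ω, past T i ω, past S i ω))
        = mi p (T i) (fun ω => (past S i ω, (past T i ω, Y ω))) :=
      mi_congr_right p (T i) (fun ω => (past S i ω, (past T i ω, Y ω)))
        (fun ω => (Y ω, past T i ω, past S i ω))
        (fun z => (z.2.2, z.2.1, z.1)) (fun ω => rfl)
        (fun ω ω' h => by
          simp only [Prod.mk.injEq] at h ⊢
          exact ⟨h.2.2, h.2.1, h.1⟩)
    have r2 : mi p (T i) (fun ω => (past S i ω, (past T i ω, Y ω)))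
        = mi p (T i) (fun ω => (past T i ω, Y ω))
          + cmi p (T i) (past S i) (fun ω => (past T i ω, Y ω)) :=
      cmi_eq p (T i) (past S i) (fun ω => (past T i ω, Y ω))
    have r3 : cmi p (T i) (past S i) (fun ω => (past T i ω, Y ω)) = 0 := by
      rw [cmi_symm]
      exact hMarkov i
    have r4 : mi p (T i) (fun ω => (past T i ω, Y ω))
        = mi p (T i) (fun ω => (Y ω, past T i ω)) :=
      mi_congr_right p (T i) (fun ω => (Y ω, past T i ω))
        (fun ω => (past T i ω, Y ω)) Prod.swap (fun ω => rfl)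
        (fun ω ω' h => by
          simp only [Prod.mk.injEq] at h ⊢
          exact ⟨h.2, h.1⟩)
    have r5 : mi p (T i) (fun ω => (Y ω, past T i ω))
        = mi p (T i) (past T i) + cmi p (T i) Y (past T i) :=
      cmi_eq p (T i) Y (past T i)
    rw [r1, r2, r3, r4, r5, hindep i]
    ring
  -- Step B : telescoping
  have hpast : ∀ i : Fin n, past T i = pfx T (i:ℕ) := fun i => rfl
  have hcmi : ∀ i : Fin n, cmi p (T i) Y (past T i)
      = (ent (push p (pfx T ((i:ℕ)+1))) - ent (push p (pfx T (i:ℕ))))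
        - (ent (push p (fun ω => (Y ω, pfx T ((i:ℕ)+1) ω)))
          - ent (push p (fun ω => (Y ω, pfx T (i:ℕ) ω)))) := by
    intro i
    rw [show cmi p (T i) Y (past T i)
        = ent (push p (fun ω => (T i ω, pfx T (i:ℕ) ω)))
          + ent (push p (fun ω => (Y ω, pfx T (i:ℕ) ω)))
          - ent (push p (fun ω => (T i ω, Y ω, pfx T (i:ℕ) ω)))
          - ent (push p (pfx T (i:ℕ))) from rfl,
      ent_pair_pfx p T i, ent_triple_pfx p T Y i]
    ring
  have t1 : ∑ i : Fin n,
      (ent (push p (pfx T ((i:ℕ)+1))) - ent (push p (pfx T (i:ℕ))))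
      = ent (push p (pfx T n)) - ent (push p (pfx T 0)) := by
    rw [Fin.sum_univ_eq_sum_range (fun k => ent (push p (pfx T (k+1))) - ent (push p (pfx T k))) n]
    exact Finset.sum_range_sub (fun k => ent (push p (pfx T k))) n
  have t2 : ∑ i : Fin n,
      (ent (push p (fun ω => (Y ω, pfx T ((i:ℕ)+1) ω)))
        - ent (push p (fun ω => (Y ω, pfx T (i:ℕ) ω))))
      = ent (push p (fun ω => (Y ω, pfx T n ω)))
        - ent (push p (fun ω => (Y ω, pfx T 0 ω))) := by
    rw [Fin.sum_univ_eq_sum_range (fun k => ent (push p (fun ω => (Y ω, pfx T (k+1) ω)))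
      - ent (push p (fun ω => (Y ω, pfx T k ω)))) n]
    exact Finset.sum_range_sub (fun k => ent (push p (fun ω => (Y ω, pfx T k ω)))) n
  calc mi p (fun ω => fun i => T i ω) Y
      = ent (push p (fun ω => fun j => T j ω)) + ent (push p Y)
        - ent (push p (fun ω => ((fun j => T j ω), Y ω))) := rfl
    _ = (ent (push p (pfx T n)) - ent (push p (pfx T 0)))
        - (ent (push p (fun ω => (Y ω, pfx T n ω)))
          - ent (push p (fun ω => (Y ω, pfx T 0 ω)))) := by
        rw [ent_pfx_zero p hp1 T, ent_pfx_zero_pair p T Y, ent_pfx_full p T,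
          ent_pfx_full_pair p T Y,
          ← ent_swap p (fun ω => (fun j => T j ω)) Y]
        ring
    _ = ∑ i : Fin n,
        ((ent (push p (pfx T ((i:ℕ)+1))) - ent (push p (pfx T (i:ℕ))))
          - (ent (push p (fun ω => (Y ω, pfx T ((i:ℕ)+1) ω)))
            - ent (push p (fun ω => (Y ω, pfx T (i:ℕ) ω))))) := by
        rw [Finset.sum_sub_distrib, t1, t2]
    _ = ∑ i : Fin n, mi p (T i) (fun ω => (Y ω, past T i ω, past S i ω)) := by
        refine Finset.sum_congr rfl fun i _ => ?_
        rw [stepA i, hcmi i]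
end
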